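/- Consider the ruled surface X(s,t) = α(s) + t β(s) with β(s) = (cos s, sin s, 0) and α(s) = a(s) β'(s) + b(s) β(s)×β'(s), where a(s) = c₁ cos s (c₁ ≠ 0) and b(s) = b₁ s + b₀ (b₁ ≠ 0). Then the determinants h₁₁ = det(X_s, X_t, X_ss), h₁₂ = det(X_s, X_t, X_st), h₂₂ = det(X_s, X_t, X_tt) satisfy h₁₁ = b₁(a'' − a) and the mean curvature numerator g₂₂ h₁₁ − 2 g₁₂ h₁₂ + g₁₁ h₂₂ vanishes identically, i.e. X is a minimal surface (the helicoid case). -/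

import Mathlib

/-!
Write `R_s` for the rotation by `s` about the z-axis. Then `β(s) = R_s e₁`, `β'(s) = R_s e₂`,
`β × β' = e₃ = R_s e₃`, so `X(s,t) = R_s (t, a(s), b(s))`. Rotations preserve dot products and
determinants, so all of `g_ij`, `h_ij` may be computed from the coordinates in the rotating frame,
where differentiation in `s` adds `e₃ × (p, q, r) = (-q, p, 0)`. This gives
`X_s = (-a, a' + t, b₁)`, `X_t = e₁`, `X_ss = (-2a' - t, a'' - a, 0)`, `X_st = e₂`, `X_tt = 0`,
hence `h₁₁ = b₁ (a'' - a)`, `h₁₂ = b₁`, `h₂₂ = 0`, `g₁₂ = -a`, `g₂₂ = 1`, and the mean curvature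
numerator is `b₁ (a'' + a)`, which vanishes because `a = c₁ cos` solves `a'' = -a`.
-/

open Matrix Real

section RuledSurface

variable {E : Type*} [NormedAddCommGroup E] [NormedSpace ℝ E] {α β : ℝ → E}

theorem deriv_const_add_smul_const (p v : E) : deriv (fun t : ℝ => p + t • v) = fun _ => v := by
  funext t
  exact (((hasDerivAt_id t).smul_const v).const_add p).deriv.trans (one_smul ℝ v)

theorem deriv_add_const_smul (hα : Differentiable ℝ α) (hβ : Differentiable ℝ β) (t : ℝ) :
    deriv (fun s => α s + t • β s) = fun s => deriv α s + t • deriv β s := by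
  funext s
  exact ((hα s).hasDerivAt.add ((hβ s).hasDerivAt.const_smul t)).deriv

end RuledSurface

theorem dotProduct_mulVec_mulVec_of_transpose_mul_self {n : Type*} [Fintype n] [DecidableEq n]
    {A : Matrix n n ℝ} (hA : Aᵀ * A = 1) (u v : n → ℝ) : (A *ᵥ u) ⬝ᵥ (A *ᵥ v) = u ⬝ᵥ v := by
  rw [dotProduct_mulVec, vecMul_mulVec, hA, vecMul_one]

theorem det_of_mulVec (A : Matrix (Fin 3) (Fin 3) ℝ) (u v w : Fin 3 → ℝ) :
    (of ![A *ᵥ u, A *ᵥ v, A *ᵥ w]).det = A.det * (of ![u, v, w]).det := by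
  have : of ![A *ᵥ u, A *ᵥ v, A *ᵥ w] = of ![u, v, w] * Aᵀ := by
    ext i j; fin_cases i <;> simp [mul_apply, mulVec, dotProduct, mul_comm]
  rw [this, det_mul, det_transpose, mul_comm]

noncomputable def rotZ (s : ℝ) : Matrix (Fin 3) (Fin 3) ℝ :=
  !![cos s, -sin s, 0; sin s, cos s, 0; 0, 0, 1]

@[simp]
theorem rotZ_mulVec (s p q r : ℝ) :
    rotZ s *ᵥ ![p, q, r] = ![cos s * p - sin s * q, sin s * p + cos s * q, r] := by
  ext i; fin_cases i <;> simp [rotZ, mulVec, dotProduct, Fin.sum_univ_three]; ring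

theorem det_rotZ (s : ℝ) : (rotZ s).det = 1 := by
  simp [rotZ, det_fin_three, ← sq, add_comm]

theorem rotZ_transpose_mul_self (s : ℝ) : (rotZ s)ᵀ * rotZ s = 1 := by
  ext i j; fin_cases i <;> fin_cases j <;>
    simp [rotZ, mul_apply, Fin.sum_univ_three, ← sq, sin_sq_add_cos_sq, cos_sq_add_sin_sq, mul_comm]

theorem cross_rotZ_mulVec (s : ℝ) (u v : Fin 3 → ℝ) :
    crossProduct (rotZ s *ᵥ u) (rotZ s *ᵥ v) = rotZ s *ᵥ crossProduct u v := by
  ext i; fin_cases i <;> simp [rotZ, cross_apply, mulVec, dotProduct, Fin.sum_univ_three]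
  · ring
  · ring
  · linear_combination (u 0 * v 1 - u 1 * v 0) * sin_sq_add_cos_sq s

theorem hasDerivAt_rotZ_mulVec {p q r : ℝ → ℝ} {p' q' r' s : ℝ} (hp : HasDerivAt p p' s)
    (hq : HasDerivAt q q' s) (hr : HasDerivAt r r' s) :
    HasDerivAt (fun u => rotZ u *ᵥ ![p u, q u, r u]) (rotZ s *ᵥ ![p' - q s, q' + p s, r']) s := by
  simp only [rotZ_mulVec]
  refine hasDerivAt_pi.2 fun i => ?_
  fin_cases i
  · exact (((hasDerivAt_cos s).mul hp).sub ((hasDerivAt_sin s).mul hq)).congr_deriv (by simp; ring)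
  · exact (((hasDerivAt_sin s).mul hp).add ((hasDerivAt_cos s).mul hq)).congr_deriv (by simp; ring)
  · exact hr

theorem deriv_rotZ_mulVec {p q r : ℝ → ℝ} (hp : Differentiable ℝ p)
    (hq : Differentiable ℝ q) (hr : Differentiable ℝ r) :
    deriv (fun u => rotZ u *ᵥ ![p u, q u, r u]) =
      fun s => rotZ s *ᵥ ![deriv p s - q s, deriv q s + p s, deriv r s] := funext fun s =>
  (hasDerivAt_rotZ_mulVec (hp s).hasDerivAt (hq s).hasDerivAt (hr s).hasDerivAt).deriv

theorem contDiff_rotZ_mulVec {n : WithTop ℕ∞} {p q r : ℝ → ℝ} (hp : ContDiff ℝ n p)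
    (hq : ContDiff ℝ n q) (hr : ContDiff ℝ n r) :
    ContDiff ℝ n fun u => rotZ u *ᵥ ![p u, q u, r u] := by
  simp only [rotZ_mulVec]
  refine contDiff_pi.2 fun i => ?_
  fin_cases i <;> simp only [Fin.zero_eta, Fin.mk_one, Fin.reduceFinMk, cons_val] <;> fun_prop

theorem equator_eq_rotZ_mulVec :
    (fun s => ![cos s, sin s, 0]) = fun s => rotZ s *ᵥ ![1, 0, 0] := by
  funext s; simp

theorem deriv_rotZ_mulVec_e₁ :
    deriv (fun s => rotZ s *ᵥ ![1, 0, 0]) = fun s => rotZ s *ᵥ ![0, 1, 0] := by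
  simpa using deriv_rotZ_mulVec (differentiable_const (1 : ℝ)) (differentiable_const 0)
    (differentiable_const 0)

theorem deriv_rotZ_mulVec_e₂ :
    deriv (fun s => rotZ s *ᵥ ![0, 1, 0]) = fun s => rotZ s *ᵥ ![-1, 0, 0] := by
  simpa using deriv_rotZ_mulVec (differentiable_const (0 : ℝ)) (differentiable_const 1)
    (differentiable_const 0)

theorem smul_deriv_equator_add_smul_cross (a b s : ℝ) :
    a • deriv (fun s => ![cos s, sin s, 0]) s +
        b • crossProduct ![cos s, sin s, 0] (deriv (fun s => ![cos s, sin s, 0]) s) =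
      rotZ s *ᵥ ![0, a, b] := by
  rw [equator_eq_rotZ_mulVec, deriv_rotZ_mulVec_e₁, congrFun equator_eq_rotZ_mulVec s]
  beta_reduce
  rw [cross_rotZ_mulVec, ← mulVec_smul, ← mulVec_smul, ← mulVec_add]
  congr 1
  ext i; fin_cases i <;> simp [cross_apply]

theorem deriv_rotZ_mulVec_directrix {a b : ℝ → ℝ} (ha : Differentiable ℝ a)
    (hb : Differentiable ℝ b) :
    deriv (fun s => rotZ s *ᵥ ![0, a s, b s]) =
      fun s => rotZ s *ᵥ ![-a s, deriv a s, deriv b s] := by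
  simpa using deriv_rotZ_mulVec (differentiable_const 0) ha hb

theorem deriv_deriv_rotZ_mulVec_directrix {a b : ℝ → ℝ} (ha : ContDiff ℝ 2 a)
    (hb : ContDiff ℝ 2 b) :
    deriv (deriv fun s => rotZ s *ᵥ ![0, a s, b s]) =
      fun s => rotZ s *ᵥ ![-2 * deriv a s, deriv (deriv a) s - a s, deriv (deriv b) s] := by
  have ha₁ := ha.differentiable two_ne_zero
  rw [deriv_rotZ_mulVec_directrix ha₁ (hb.differentiable two_ne_zero),
    deriv_rotZ_mulVec (p := fun s => -a s) ha₁.neg ha.differentiable_deriv_two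
      hb.differentiable_deriv_two]
  funext s
  simp only [deriv.fun_neg]
  ring_nf

theorem stmt_11_general (c₁ b₁ b₀ : ℝ)
    (β α : ℝ → Fin 3 → ℝ) (a b : ℝ → ℝ) (X : ℝ → ℝ → Fin 3 → ℝ)
    (hβ : β = fun s => ![Real.cos s, Real.sin s, 0])
    (ha : a = fun s => c₁ * Real.cos s)
    (hb : b = fun s => b₁ * s + b₀)
    (hα : ∀ s, α s = a s • deriv β s + b s • crossProduct (β s) (deriv β s))
    (hX : ∀ s t, X s t = α s + t • β s) :
    ∀ s t : ℝ,
      (Matrix.of ![deriv (fun u => X u t) s, deriv (fun u => X s u) t,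
          deriv (deriv (fun u => X u t)) s]).det = b₁ * (deriv (deriv a) s - a s)
      ∧ (deriv (fun u => X s u) t ⬝ᵥ deriv (fun u => X s u) t)
          * (Matrix.of ![deriv (fun u => X u t) s, deriv (fun u => X s u) t,
              deriv (deriv (fun u => X u t)) s]).det
        - 2 * (deriv (fun u => X u t) s ⬝ᵥ deriv (fun u => X s u) t)
          * (Matrix.of ![deriv (fun u => X u t) s, deriv (fun u => X s u) t,
              deriv (fun u => deriv (fun v => X v u) s) t]).det
        + (deriv (fun u => X u t) s ⬝ᵥ deriv (fun u => X u t) s)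
          * (Matrix.of ![deriv (fun u => X u t) s, deriv (fun u => X s u) t,
              deriv (deriv (fun u => X s u)) t]).det = 0 := by
  have ha₂ : ContDiff ℝ 2 a := by rw [ha]; fun_prop
  have hb₂ : ContDiff ℝ 2 b := by rw [hb]; fun_prop
  have ha'' : deriv (deriv a) = fun s => -a s := by subst ha; funext s; simp
  have hb' : deriv b = fun _ => b₁ := by subst hb; funext s; simp
  obtain rfl : α = fun s => rotZ s *ᵥ ![0, a s, b s] := by
    funext s; rw [hα, hβ]; exact smul_deriv_equator_add_smul_cross _ _ s
  obtain rfl : β = fun s => rotZ s *ᵥ ![1, 0, 0] := hβ.trans equator_eq_rotZ_mulVec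
  have hα₂ : ContDiff ℝ 2 fun s => rotZ s *ᵥ ![0, a s, b s] :=
    contDiff_rotZ_mulVec contDiff_const ha₂ hb₂
  have hβ₂ : ContDiff ℝ 2 fun s => rotZ s *ᵥ ![1, 0, 0] :=
    contDiff_rotZ_mulVec contDiff_const contDiff_const contDiff_const
  intro s t
  simp only [hX, deriv_add_const_smul (hα₂.differentiable two_ne_zero)
    (hβ₂.differentiable two_ne_zero),
    deriv_add_const_smul hα₂.differentiable_deriv_two hβ₂.differentiable_deriv_two,
    deriv_const_add_smul_const]
  rw [deriv_deriv_rotZ_mulVec_directrix ha₂ hb₂, deriv_rotZ_mulVec_directrix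
    (ha₂.differentiable two_ne_zero) (hb₂.differentiable two_ne_zero), deriv_rotZ_mulVec_e₁,
    deriv_rotZ_mulVec_e₂, deriv_const]
  simp only [← mulVec_smul, ← mulVec_add, det_of_mulVec, det_rotZ,
    dotProduct_mulVec_mulVec_of_transpose_mul_self (rotZ_transpose_mul_self s)]
  rw [ha'', hb']
  constructor
  · simp [det_fin_three]
  · simp [det_fin_three, dotProduct, Fin.sum_univ_three]
    ring

/-- The helicoid case: for β the horizontal equator, a = c₁ cos s, b = b₁ s + b₀,
    X(s,t) = α(s) + tβ(s) with α = a β' + b β×β', one has h₁₁ = b₁(a'' − a) and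
    g₂₂ h₁₁ − 2 g₁₂ h₁₂ + g₁₁ h₂₂ = 0 (a minimal surface). -/
theorem stmt_11 (c₁ b₁ b₀ : ℝ) (hc₁ : c₁ ≠ 0) (hb₁ : b₁ ≠ 0)
    (β α : ℝ → Fin 3 → ℝ) (a b : ℝ → ℝ) (X : ℝ → ℝ → Fin 3 → ℝ)
    (hβ : β = fun s => ![Real.cos s, Real.sin s, 0])
    (ha : a = fun s => c₁ * Real.cos s)
    (hb : b = fun s => b₁ * s + b₀)
    (hα : ∀ s, α s = a s • deriv β s + b s • crossProduct (β s) (deriv β s))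
    (hX : ∀ s t, X s t = α s + t • β s) :
    ∀ s t : ℝ,
      (Matrix.of ![deriv (fun u => X u t) s, deriv (fun u => X s u) t,
          deriv (deriv (fun u => X u t)) s]).det = b₁ * (deriv (deriv a) s - a s)
      ∧ (deriv (fun u => X s u) t ⬝ᵥ deriv (fun u => X s u) t)
          * (Matrix.of ![deriv (fun u => X u t) s, deriv (fun u => X s u) t,
              deriv (deriv (fun u => X u t)) s]).det
        - 2 * (deriv (fun u => X u t) s ⬝ᵥ deriv (fun u => X s u) t)
          * (Matrix.of ![deriv (fun u => X u t) s, deriv (fun u => X s u) t,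
              deriv (fun u => deriv (fun v => X v u) s) t]).det
        + (deriv (fun u => X u t) s ⬝ᵥ deriv (fun u => X u t) s)
          * (Matrix.of ![deriv (fun u => X u t) s, deriv (fun u => X s u) t,
              deriv (deriv (fun u => X s u)) t]).det = 0 :=
  stmt_11_general c₁ b₁ b₀ β α a b X hβ ha hb hα hX
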